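/- arXiv:1907.02826 — 3 statements merged into one kernel-verified Lean document; each statement's English description precedes it below -/
import Mathlib

section
/- Let 0 < a < b and let V'(x) = γ + β/(1+x) - (α-1)/x. Then the pair of conditions (1/π)∫_a^b V'(x)/√((b-x)(x-a)) dx = 0 and (1/π)∫_a^b x·V'(x)/√((b-x)(x-a)) dx = 2 is equivalent to the system: γ + β/√((a+1)(b+1)) - (α-1)/√(ab) = 0 and γ(a+b)/2 - α + 1 + β - β/√((a+1)(b+1)) = 2. -/
/-!
Both moments reduce, by linearity, to three integrals against the Chebyshev weight
`1 / √((b - x) * (x - a))`: `∫ 1 = π`, `∫ x = π * (a + b) / 2` and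
`∫ 1 / (c + x) = π / √((a + c) * (b + c))` when `0 < a + c`. Each is evaluated by the
fundamental theorem of calculus with an `arcsin` antiderivative: `arcsin` of the affine map sending
`a, b` to `-1, 1`, and for the last one `arcsin` of the Möbius map
`x ↦ ((a + b) * x - 2 * a * b) / ((b - a) * x)`, which does the same. These antiderivatives are
monotone, which is what makes the improper integrals converge. Dividing by `π`, the two moment
conditions become the stated algebraic system.
-/

open Real intervalIntegral Set
open MeasureTheory (volume)

section ChebyshevWeight

variable {a b x : ℝ}

lemma sqrt_one_sub_sq_affine (hab : a < b) :
    √(1 - ((2 * x - a - b) / (b - a)) ^ 2) = 2 * √((b - x) * (x - a)) / (b - a) := by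
  have hba : 0 < b - a := by linarith
  have h : 1 - ((2 * x - a - b) / (b - a)) ^ 2 = (2 / (b - a)) ^ 2 * ((b - x) * (x - a)) := by
    field_simp; ring
  rw [h, sqrt_mul (sq_nonneg _), sqrt_sq (by positivity)]
  ring

lemma mul_sub_pos_of_mem_Ioo (hx : x ∈ Ioo a b) : 0 < (b - x) * (x - a) :=
  mul_pos (sub_pos.2 hx.2) (sub_pos.2 hx.1)

lemma hasDerivAt_arcsin_affine (hx : x ∈ Ioo a b) :
    HasDerivAt (fun x => arcsin ((2 * x - a - b) / (b - a))) (1 / √((b - x) * (x - a))) x := by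
  have hab : a < b := hx.1.trans hx.2
  have hba : 0 < b - a := by linarith
  have hne_neg : (2 * x - a - b) / (b - a) ≠ -1 := by
    rw [ne_eq, div_eq_iff hba.ne']; linarith [hx.1]
  have hne_one : (2 * x - a - b) / (b - a) ≠ 1 := by
    rw [ne_eq, div_eq_iff hba.ne']; linarith [hx.2]
  have hlin : HasDerivAt (fun x => (2 * x - a - b) / (b - a)) (2 / (b - a)) x := by
    simpa using (((hasDerivAt_id x).const_mul 2).sub_const a |>.sub_const b).div_const (b - a)
  refine ((hasDerivAt_arcsin hne_neg hne_one).comp x hlin).congr_deriv ?_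
  rw [sqrt_one_sub_sq_affine hab]
  field_simp

lemma continuousOn_arcsin_affine :
    ContinuousOn (fun x => arcsin ((2 * x - a - b) / (b - a))) (Icc a b) :=
  continuous_arcsin.comp_continuousOn (by fun_prop)

lemma intervalIntegrable_one_div_sqrt (hab : a < b) :
    IntervalIntegrable (fun x => 1 / √((b - x) * (x - a))) volume a b :=
  (intervalIntegrable_iff_integrableOn_Ioc_of_le hab.le).2 <|
    integrableOn_deriv_of_nonneg continuousOn_arcsin_affine
      (fun _ hx => hasDerivAt_arcsin_affine hx) (fun _ _ => by positivity)

lemma integral_one_div_sqrt (hab : a < b) :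
    ∫ x in a..b, 1 / √((b - x) * (x - a)) = π := by
  have hba : 0 < b - a := by linarith
  rw [integral_eq_sub_of_hasDerivAt_of_le hab.le continuousOn_arcsin_affine
      (fun _ hx => hasDerivAt_arcsin_affine hx) (intervalIntegrable_one_div_sqrt hab),
    show (2 * b - a - b) / (b - a) = 1 by field_simp; ring,
    show (2 * a - a - b) / (b - a) = -1 by field_simp; ring, arcsin_one, arcsin_neg_one]
  ring

lemma intervalIntegrable_div_sqrt {g : ℝ → ℝ} (hab : a < b) (hg : ContinuousOn g (Icc a b)) :
    IntervalIntegrable (fun x => g x / √((b - x) * (x - a))) volume a b := by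
  simpa [div_eq_mul_inv] using
    (intervalIntegrable_one_div_sqrt hab).continuousOn_mul (uIcc_of_le hab.le ▸ hg)

lemma intervalIntegrable_one_div_add_mul_sqrt {c : ℝ} (hc : 0 < a + c) (hab : a < b) :
    IntervalIntegrable (fun x => 1 / ((c + x) * √((b - x) * (x - a)))) volume a b := by
  simpa only [div_div] using intervalIntegrable_div_sqrt hab (g := fun x => 1 / (c + x))
    (continuousOn_const.div (by fun_prop) fun x hx => by linarith [hx.1])

lemma intervalIntegrable_one_div_mul_sqrt (ha : 0 < a) (hab : a < b) :
    IntervalIntegrable (fun x => 1 / (x * √((b - x) * (x - a)))) volume a b := by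
  simpa using intervalIntegrable_one_div_add_mul_sqrt (c := 0) (by simpa) hab

lemma integral_id_div_sqrt (hab : a < b) :
    ∫ x in a..b, x / √((b - x) * (x - a)) = π * (a + b) / 2 := by
  have hint := intervalIntegrable_div_sqrt hab continuousOn_id
  have hderiv : ∀ x ∈ Ioo a b, HasDerivAt
      (fun x => -√((b - x) * (x - a)) + (a + b) / 2 * arcsin ((2 * x - a - b) / (b - a)))
      (x / √((b - x) * (x - a))) x := by
    intro x hx
    have hq := mul_sub_pos_of_mem_Ioo hx
    have hprod : HasDerivAt (fun x => (b - x) * (x - a)) (a + b - 2 * x) x :=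
      (((hasDerivAt_id' x).const_sub b).mul ((hasDerivAt_id' x).sub_const a)).congr_deriv
        (by ring)
    refine ((hprod.sqrt hq.ne').neg.add
      ((hasDerivAt_arcsin_affine hx).const_mul ((a + b) / 2))).congr_deriv ?_
    field_simp
    ring
  have hcont : ContinuousOn
      (fun x => -√((b - x) * (x - a)) + (a + b) / 2 * arcsin ((2 * x - a - b) / (b - a)))
      (Icc a b) :=
    (continuous_sqrt.comp_continuousOn (by fun_prop)).neg.add
      (continuousOn_const.mul continuousOn_arcsin_affine)
  have hba : 0 < b - a := by linarith
  rw [integral_eq_sub_of_hasDerivAt_of_le hab.le hcont hderiv hint,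
    show (2 * b - a - b) / (b - a) = 1 by field_simp; ring,
    show (2 * a - a - b) / (b - a) = -1 by field_simp; ring, arcsin_one, arcsin_neg_one]
  simp only [sub_self, zero_mul, mul_zero, sqrt_zero, neg_zero, zero_add]
  ring

lemma sqrt_one_sub_sq_moebius (ha : 0 < a) (hab : a < b) (hx : 0 < x) :
    √(1 - (((a + b) * x - 2 * a * b) / ((b - a) * x)) ^ 2)
      = 2 * √(a * b) / ((b - a) * x) * √((b - x) * (x - a)) := by
  have hba : 0 < b - a := by linarith
  have hs2 : √(a * b) ^ 2 = a * b := sq_sqrt (by nlinarith)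
  have h : 1 - (((a + b) * x - 2 * a * b) / ((b - a) * x)) ^ 2
      = (2 * √(a * b) / ((b - a) * x)) ^ 2 * ((b - x) * (x - a)) := by
    field_simp
    linear_combination (-4 * (b - x) * (x - a)) * hs2
  rw [h, sqrt_mul (sq_nonneg _), sqrt_sq (by positivity)]

lemma hasDerivAt_arcsin_moebius (ha : 0 < a) (hx : x ∈ Ioo a b) :
    HasDerivAt (fun x => arcsin (((a + b) * x - 2 * a * b) / ((b - a) * x)) / √(a * b))
      (1 / (x * √((b - x) * (x - a)))) x := by
  have hab : a < b := hx.1.trans hx.2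
  have hx0 : 0 < x := ha.trans hx.1
  have hba : 0 < b - a := by linarith
  have hden : (b - a) * x ≠ 0 := by positivity
  have hs2 : √(a * b) ^ 2 = a * b := sq_sqrt (by nlinarith)
  have hs : 0 < √(a * b) := sqrt_pos.2 (by nlinarith)
  have hne_neg : ((a + b) * x - 2 * a * b) / ((b - a) * x) ≠ -1 := by
    rw [ne_eq, div_eq_iff hden]; nlinarith [hx.1]
  have hne_one : ((a + b) * x - 2 * a * b) / ((b - a) * x) ≠ 1 := by
    rw [ne_eq, div_eq_iff hden]; nlinarith [hx.2]
  have hmoeb : HasDerivAt (fun x => ((a + b) * x - 2 * a * b) / ((b - a) * x))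
      (2 * a * b / ((b - a) * x ^ 2)) x := by
    refine (((hasDerivAt_id' x).const_mul (a + b)).sub_const (2 * a * b) |>.div
      ((hasDerivAt_id' x).const_mul (b - a)) hden).congr_deriv ?_
    field_simp
    ring
  refine (((hasDerivAt_arcsin hne_neg hne_one).comp x hmoeb).div_const _).congr_deriv ?_
  have hq := sqrt_pos.2 (mul_sub_pos_of_mem_Ioo hx)
  rw [sqrt_one_sub_sq_moebius ha hab hx0]
  field_simp
  exact hs2.symm

lemma integral_one_div_mul_sqrt (ha : 0 < a) (hab : a < b) :
    ∫ x in a..b, 1 / (x * √((b - x) * (x - a))) = π / √(a * b) := by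
  have hb : 0 < b := ha.trans hab
  have hba : 0 < b - a := by linarith
  have hcont : ContinuousOn
      (fun x => arcsin (((a + b) * x - 2 * a * b) / ((b - a) * x)) / √(a * b)) (Icc a b) :=
    (continuous_arcsin.comp_continuousOn <| ContinuousOn.div (by fun_prop) (by fun_prop)
      fun x hx => by have := ha.trans_le hx.1; positivity).div_const _
  rw [integral_eq_sub_of_hasDerivAt_of_le hab.le hcont
      (fun _ hx => hasDerivAt_arcsin_moebius ha hx) (intervalIntegrable_one_div_mul_sqrt ha hab),
    show ((a + b) * b - 2 * a * b) / ((b - a) * b) = 1 by field_simp; ring,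
    show ((a + b) * a - 2 * a * b) / ((b - a) * a) = -1 by field_simp; ring,
    arcsin_one, arcsin_neg_one]
  ring

lemma integral_one_div_add_mul_sqrt {c : ℝ} (hc : 0 < a + c) (hab : a < b) :
    ∫ x in a..b, 1 / ((c + x) * √((b - x) * (x - a))) = π / √((a + c) * (b + c)) :=
  calc ∫ x in a..b, 1 / ((c + x) * √((b - x) * (x - a)))
      = ∫ x in a..b, (fun t => 1 / (t * √((b + c - t) * (t - (a + c))))) (x + c) := by
        congr 1 with x; ring_nf
    _ = π / √((a + c) * (b + c)) :=
        (integral_comp_add_right _ c).trans (integral_one_div_mul_sqrt hc (by linarith))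

end ChebyshevWeight

section Potential

variable {a b c : ℝ}

lemma integral_potential_div_sqrt (p q r : ℝ) (ha : 0 < a) (hc : 0 < a + c) (hab : a < b) :
    ∫ x in a..b, (p + q / (c + x) - r / x) / √((b - x) * (x - a))
      = π * (p + q / √((a + c) * (b + c)) - r / √(a * b)) := by
  have hsplit : (fun x => (p + q / (c + x) - r / x) / √((b - x) * (x - a)))
      = fun x => p * (1 / √((b - x) * (x - a))) + q * (1 / ((c + x) * √((b - x) * (x - a))))
          - r * (1 / (x * √((b - x) * (x - a)))) := by
    ext x
    simp only [sub_div, add_div, div_div, mul_one_div]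
  have i1 := (intervalIntegrable_one_div_sqrt hab).const_mul p
  have ic := (intervalIntegrable_one_div_add_mul_sqrt hc hab).const_mul q
  have i0 := (intervalIntegrable_one_div_mul_sqrt ha hab).const_mul r
  rw [hsplit, integral_sub (i1.add ic) i0, integral_add i1 ic,
    integral_const_mul, integral_const_mul, integral_const_mul, integral_one_div_sqrt hab,
    integral_one_div_add_mul_sqrt hc hab, integral_one_div_mul_sqrt ha hab]
  ring

lemma integral_mul_potential_div_sqrt (p q r : ℝ) (ha : 0 < a) (hc : 0 < a + c) (hab : a < b) :
    ∫ x in a..b, x * (p + q / (c + x) - r / x) / √((b - x) * (x - a))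
      = π * (p * (a + b) / 2 + q - r - q * c / √((a + c) * (b + c))) := by
  have hsplit : EqOn (fun x => x * (p + q / (c + x) - r / x) / √((b - x) * (x - a)))
      (fun x => p * (x / √((b - x) * (x - a))) + (q - r) * (1 / √((b - x) * (x - a)))
        - q * c * (1 / ((c + x) * √((b - x) * (x - a))))) (uIcc a b) := by
    intro x hx
    rw [uIcc_of_le hab.le] at hx
    have hx0 : x ≠ 0 := by linarith [hx.1]
    have hcx : c + x ≠ 0 := by linarith [hx.1]
    field_simp
    ring
  have ix := (intervalIntegrable_div_sqrt (g := fun x => x) hab continuousOn_id).const_mul p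
  have i1 := (intervalIntegrable_one_div_sqrt hab).const_mul (q - r)
  have ic := (intervalIntegrable_one_div_add_mul_sqrt hc hab).const_mul (q * c)
  rw [integral_congr hsplit, integral_sub (ix.add i1) ic, integral_add ix i1,
    integral_const_mul, integral_const_mul, integral_const_mul, integral_id_div_sqrt hab,
    integral_one_div_sqrt hab, integral_one_div_add_mul_sqrt hc hab]
  ring

end Potential

theorem stmt_4_general (α β γ a b : ℝ) (ha : 0 < a) (hab : a < b) :
    ((1 / Real.pi) * ∫ x in a..b,
        (γ + β / (1 + x) - (α - 1) / x) / Real.sqrt ((b - x) * (x - a)) = 0 ∧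
     (1 / Real.pi) * ∫ x in a..b,
        x * (γ + β / (1 + x) - (α - 1) / x) / Real.sqrt ((b - x) * (x - a)) = 2)
    ↔
    (γ + β / Real.sqrt ((a + 1) * (b + 1)) - (α - 1) / Real.sqrt (a * b) = 0 ∧
     γ * (a + b) / 2 - α + 1 + β - β / Real.sqrt ((a + 1) * (b + 1)) = 2) := by
  have h1 : 0 < a + 1 := by linarith
  rw [integral_potential_div_sqrt γ β (α - 1) ha h1 hab, integral_mul_potential_div_sqrt γ β (α - 1) ha h1 hab,
    ← mul_assoc, ← mul_assoc, one_div_mul_cancel pi_ne_zero, one_mul, one_mul, mul_one]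
  ring_nf

theorem stmt_4 (α β γ a b : ℝ) (hγ : 0 < γ) (hα : 1 < α) (ha : 0 < a) (hab : a < b) :
    ((1 / Real.pi) * ∫ x in a..b,
        (γ + β / (1 + x) - (α - 1) / x) / Real.sqrt ((b - x) * (x - a)) = 0 ∧
     (1 / Real.pi) * ∫ x in a..b,
        x * (γ + β / (1 + x) - (α - 1) / x) / Real.sqrt ((b - x) * (x - a)) = 2)
    ↔
    (γ + β / Real.sqrt ((a + 1) * (b + 1)) - (α - 1) / Real.sqrt (a * b) = 0 ∧
     γ * (a + b) / 2 - α + 1 + β - β / Real.sqrt ((a + 1) * (b + 1)) = 2) :=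
  stmt_4_general α β γ a b ha hab
end

section
/- The function μ_V(x) = (1/(2π))·√((x-a)(b-x))·((α-1)/(x√(ab)) - β/((1+x)√((a+1)(b+1)))) on (a,b) integrates to 1, provided 0 < a < b, γ > 0, α > 1, β ∈ ℝ satisfy the system γ + β/√((a+1)(b+1)) - (α-1)/√(ab) = 0 and γ(a+b)/2 - α + 1 + β - β/√((a+1)(b+1)) = 2. -/
/-!
The density is a combination of `√((x - a) * (b - x)) / (x + c)` for `c = 0` and `c = 1`, and
`∫_a^b √((x - a) * (b - x)) / (x + c) = π ((a + b) / 2 + c - √((a + c) * (b + c)))`.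
With these two integrals, the first equation of the system identifies `(α - 1) / √(ab)` with
`γ + β / √((a + 1)(b + 1))`, and the second one then says exactly that the total mass is `1`.
The integral for `c = 0` comes from the antiderivative
`√((x - a) * (b - x)) + (a + b) / 2 * arcsin ((2x - a - b) / (b - a))
  - √(ab) * arcsin (((a + b) x - 2ab) / ((b - a) x))`,
whose two arcsine arguments both run from `-1` at `x = a` to `1` at `x = b`;
the general case follows by translation.
-/

open Real Set

theorem HasDerivAt.arcsin_of_sq_lt_one {f : ℝ → ℝ} {f' x : ℝ} (hf : HasDerivAt f f' x)
    (h : f x ^ 2 < 1) : HasDerivAt (fun y => arcsin (f y)) (f' / √(1 - f x ^ 2)) x := by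
  obtain ⟨hlo, hhi⟩ := abs_lt.1 ((sq_lt_one_iff_abs_lt_one (f x)).1 h)
  have := (hasDerivAt_arcsin hlo.ne' hhi.ne).comp x hf
  rwa [one_div_mul_eq_div] at this

section SemicircleIntegral

variable {a b x : ℝ}

lemma one_sub_sq_affine_arg (hab : a < b) (x : ℝ) :
    1 - ((2 * x - (a + b)) / (b - a)) ^ 2 = (2 / (b - a)) ^ 2 * ((x - a) * (b - x)) := by
  have : b - a ≠ 0 := by linarith
  field_simp
  ring

lemma one_sub_sq_mobius_arg (hab : a < b) (hx : x ≠ 0) :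
    1 - (((a + b) * x - 2 * a * b) / ((b - a) * x)) ^ 2
      = (2 / ((b - a) * x)) ^ 2 * (a * b) * ((x - a) * (b - x)) := by
  have : b - a ≠ 0 := by linarith
  field_simp
  ring

lemma hasDerivAt_sqrt_mul_sub (hx : x ∈ Ioo a b) :
    HasDerivAt (fun y => √((y - a) * (b - y)))
      ((a + b - 2 * x) / (2 * √((x - a) * (b - x)))) x := by
  have hP : (x - a) * (b - x) ≠ 0 := (mul_pos (sub_pos.2 hx.1) (sub_pos.2 hx.2)).ne'
  have hinner : HasDerivAt (fun y => (y - a) * (b - y)) (a + b - 2 * x) x :=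
    (((hasDerivAt_id' x).sub_const a).fun_mul ((hasDerivAt_id' x).const_sub b)).congr_deriv
      (by ring)
  exact hinner.sqrt hP

lemma hasDerivAt_arcsin_affine_arg (hx : x ∈ Ioo a b) :
    HasDerivAt (fun y => arcsin ((2 * y - (a + b)) / (b - a)))
      (1 / √((x - a) * (b - x))) x := by
  have hba : 0 < b - a := by linarith [hx.1, hx.2]
  have hP : 0 < (x - a) * (b - x) := mul_pos (sub_pos.2 hx.1) (sub_pos.2 hx.2)
  have key := one_sub_sq_affine_arg (sub_pos.1 hba) x
  have hinner : HasDerivAt (fun y => (2 * y - (a + b)) / (b - a)) (2 / (b - a)) x := by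
    simpa using (((hasDerivAt_id x).const_mul 2).sub_const (a + b)).div_const (b - a)
  have hlt : ((2 * x - (a + b)) / (b - a)) ^ 2 < 1 := by
    have : 0 < (2 / (b - a)) ^ 2 * ((x - a) * (b - x)) := by positivity
    linarith
  convert hinner.arcsin_of_sq_lt_one hlt using 1
  rw [key, sqrt_mul' _ hP.le, sqrt_sq (by positivity)]
  have := sqrt_pos.2 hP
  field_simp

lemma hasDerivAt_arcsin_mobius_arg (ha : 0 < a) (hx : x ∈ Ioo a b) :
    HasDerivAt (fun y => arcsin (((a + b) * y - 2 * a * b) / ((b - a) * y)))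
      (√(a * b) / (x * √((x - a) * (b - x)))) x := by
  have hba : 0 < b - a := by linarith [hx.1, hx.2]
  have hx0 : 0 < x := ha.trans hx.1
  have hP : 0 < (x - a) * (b - x) := mul_pos (sub_pos.2 hx.1) (sub_pos.2 hx.2)
  have hab : 0 < a * b := mul_pos ha (by linarith)
  have key := one_sub_sq_mobius_arg (sub_pos.1 hba) hx0.ne'
  have hinner : HasDerivAt (fun y => ((a + b) * y - 2 * a * b) / ((b - a) * y))
      (2 * a * b / ((b - a) * x ^ 2)) x := by
    refine ((((hasDerivAt_id' x).const_mul (a + b)).sub_const (2 * a * b)).fun_div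
      ((hasDerivAt_id' x).const_mul (b - a)) (by positivity)).congr_deriv ?_
    field_simp
    ring
  have hlt : (((a + b) * x - 2 * a * b) / ((b - a) * x)) ^ 2 < 1 := by
    have : 0 < (2 / ((b - a) * x)) ^ 2 * (a * b) * ((x - a) * (b - x)) := by positivity
    linarith
  convert hinner.arcsin_of_sq_lt_one hlt using 1
  rw [key, sqrt_mul' _ hP.le, sqrt_mul' _ hab.le, sqrt_sq (by positivity)]
  have := sqrt_pos.2 hP
  have := sqrt_pos.2 hab
  field_simp
  rw [sq_sqrt hab.le]

noncomputable def semicircleDivAntideriv (a b x : ℝ) : ℝ :=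
  √((x - a) * (b - x)) + (a + b) / 2 * arcsin ((2 * x - (a + b)) / (b - a))
    - √(a * b) * arcsin (((a + b) * x - 2 * a * b) / ((b - a) * x))

lemma hasDerivAt_semicircleDivAntideriv (ha : 0 < a) (hx : x ∈ Ioo a b) :
    HasDerivAt (semicircleDivAntideriv a b) (√((x - a) * (b - x)) / x) x := by
  have hx0 : 0 < x := ha.trans hx.1
  have hP : 0 < (x - a) * (b - x) := mul_pos (sub_pos.2 hx.1) (sub_pos.2 hx.2)
  refine (((hasDerivAt_sqrt_mul_sub hx).add
    ((hasDerivAt_arcsin_affine_arg hx).const_mul ((a + b) / 2))).sub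
    ((hasDerivAt_arcsin_mobius_arg ha hx).const_mul √(a * b))).congr_deriv ?_
  have hs := sqrt_pos.2 hP
  field_simp
  rw [sq_sqrt (mul_pos ha (ha.trans (hx.1.trans hx.2))).le, sq_sqrt hP.le]
  ring

lemma continuousOn_semicircleDivAntideriv (ha : 0 < a) (hab : a < b) :
    ContinuousOn (semicircleDivAntideriv a b) (Icc a b) := by
  have hne : ∀ x ∈ Icc a b, (b - a) * x ≠ 0 := fun x hx => by
    have : 0 < b - a := sub_pos.2 hab
    have : 0 < x := ha.trans_le hx.1
    positivity
  unfold semicircleDivAntideriv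
  fun_prop (disch := assumption)

lemma semicircleDivAntideriv_right (ha : 0 < a) (hab : a < b) :
    semicircleDivAntideriv a b b = ((a + b) / 2 - √(a * b)) * (π / 2) := by
  have : b - a ≠ 0 := by linarith
  have : b ≠ 0 := by linarith
  have h1 : (2 * b - (a + b)) / (b - a) = 1 := by field_simp; ring
  have h2 : ((a + b) * b - 2 * a * b) / ((b - a) * b) = 1 := by field_simp; ring
  simp only [semicircleDivAntideriv, sub_self, mul_zero, sqrt_zero, h1, arcsin_one, zero_add, h2]
  ring

lemma semicircleDivAntideriv_left (ha : 0 < a) (hab : a < b) :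
    semicircleDivAntideriv a b a = -(((a + b) / 2 - √(a * b)) * (π / 2)) := by
  have : b - a ≠ 0 := by linarith
  have : a ≠ 0 := ha.ne'
  have h1 : (2 * a - (a + b)) / (b - a) = -1 := by field_simp; ring
  have h2 : ((a + b) * a - 2 * a * b) / ((b - a) * a) = -1 := by field_simp; ring
  simp only [semicircleDivAntideriv, sub_self, zero_mul, sqrt_zero, h1, arcsin_neg, arcsin_one,
    mul_neg, zero_add, h2, sub_neg_eq_add]
  ring

lemma intervalIntegrable_sqrt_mul_sub_div_add {c : ℝ} (hac : 0 < a + c) (hab : a ≤ b) :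
    IntervalIntegrable (fun x => √((x - a) * (b - x)) / (x + c)) MeasureTheory.volume a b := by
  refine ContinuousOn.intervalIntegrable (ContinuousOn.div (by fun_prop) (by fun_prop) ?_)
  intro x hx
  rw [uIcc_of_le hab] at hx
  linarith [hx.1]

lemma intervalIntegrable_sqrt_mul_sub_div (ha : 0 < a) (hab : a ≤ b) :
    IntervalIntegrable (fun x => √((x - a) * (b - x)) / x) MeasureTheory.volume a b := by
  simpa using intervalIntegrable_sqrt_mul_sub_div_add (c := 0) (by simpa using ha) hab

theorem integral_sqrt_mul_sub_div (ha : 0 < a) (hab : a < b) :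
    ∫ x in a..b, √((x - a) * (b - x)) / x = π * ((a + b) / 2 - √(a * b)) := by
  rw [intervalIntegral.integral_eq_sub_of_hasDerivAt_of_le hab.le
    (continuousOn_semicircleDivAntideriv ha hab)
    (fun x hx => hasDerivAt_semicircleDivAntideriv ha hx)
    (intervalIntegrable_sqrt_mul_sub_div ha hab.le),
    semicircleDivAntideriv_right ha hab, semicircleDivAntideriv_left ha hab]
  ring

theorem integral_sqrt_mul_sub_div_add {c : ℝ} (hac : 0 < a + c) (hab : a < b) :
    ∫ x in a..b, √((x - a) * (b - x)) / (x + c)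
      = π * ((a + b) / 2 + c - √((a + c) * (b + c))) := by
  have := integral_sqrt_mul_sub_div hac (by linarith : a + c < b + c)
  rw [← intervalIntegral.integral_comp_add_right] at this
  convert this using 3 with x
  · ring_nf
  · ring

end SemicircleIntegral

theorem stmt_7_general (α β γ a b : ℝ) (ha : 0 < a) (hab : a < b)
    (h1 : γ + β / Real.sqrt ((a + 1) * (b + 1)) - (α - 1) / Real.sqrt (a * b) = 0)
    (h2 : γ * (a + b) / 2 - α + 1 + β - β / Real.sqrt ((a + 1) * (b + 1)) = 2) :
    ∫ x in a..b,
      (1 / (2 * Real.pi)) * Real.sqrt ((x - a) * (b - x)) *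
        ((α - 1) / (x * Real.sqrt (a * b)) -
         β / ((1 + x) * Real.sqrt ((a + 1) * (b + 1)))) = 1 := by
  have ht : √(a * b) ≠ 0 := (sqrt_pos.2 (mul_pos ha (ha.trans hab))).ne'
  have hs : √((a + 1) * (b + 1)) ≠ 0 := (sqrt_pos.2 (by nlinarith)).ne'
  have hsplit : EqOn
      (fun x => 1 / (2 * π) * √((x - a) * (b - x)) *
        ((α - 1) / (x * √(a * b)) - β / ((1 + x) * √((a + 1) * (b + 1)))))
      (fun x => (α - 1) / √(a * b) / (2 * π) * (√((x - a) * (b - x)) / x)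
        - β / √((a + 1) * (b + 1)) / (2 * π) * (√((x - a) * (b - x)) / (x + 1))) (uIcc a b) := by
    intro x hx
    have hx0 : 0 < x := ha.trans_le (uIcc_of_le hab.le ▸ hx).1
    have : 0 < 1 + x := by linarith
    field_simp
    ring
  rw [intervalIntegral.integral_congr hsplit, intervalIntegral.integral_sub
    ((intervalIntegrable_sqrt_mul_sub_div ha hab.le).const_mul _)
    ((intervalIntegrable_sqrt_mul_sub_div_add (c := 1) (by linarith) hab.le).const_mul _),
    intervalIntegral.integral_const_mul, intervalIntegral.integral_const_mul,
    integral_sqrt_mul_sub_div ha hab, integral_sqrt_mul_sub_div_add (by linarith) hab]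
  set t := √(a * b)
  set s := √((a + 1) * (b + 1))
  have hv : (α - 1) / t * t = α - 1 := div_mul_cancel₀ _ ht
  have hu : β / s * s = β := div_mul_cancel₀ _ hs
  calc _ = ((α - 1) / t * ((a + b) / 2 - t) - β / s * ((a + b) / 2 + 1 - s)) / 2 := by
        field_simp
    _ = 1 := by linear_combination (h2 - hv + hu - (a + b) / 2 * h1) / 2

theorem stmt_7 (α β γ a b : ℝ) (ha : 0 < a) (hab : a < b) (hγ : 0 < γ) (hα : 1 < α)
    (h1 : γ + β / Real.sqrt ((a + 1) * (b + 1)) - (α - 1) / Real.sqrt (a * b) = 0)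
    (h2 : γ * (a + b) / 2 - α + 1 + β - β / Real.sqrt ((a + 1) * (b + 1)) = 2) :
    ∫ x in a..b,
      (1 / (2 * Real.pi)) * Real.sqrt ((x - a) * (b - x)) *
        ((α - 1) / (x * Real.sqrt (a * b)) -
         β / ((1 + x) * Real.sqrt ((a + 1) * (b + 1)))) = 1 :=
  stmt_7_general α β γ a b ha hab h1 h2
end

section
/- Let g(x) = ∫_a^b log|x-t|⁻¹ dμ(t) + V(x)/2 + (1/2)∫_a^b V dμ, where μ is the free-Kummer equilibrium measure with parameters α, β, γ (γ > 0) on [a,b]. Then for x > b, g'(x) = (1/2)√((x-a)(x-b))·((α-1)/(x√(ab)) - β/((1+x)√((a+1)(b+1)))) and this expression is strictly positive; hence g is strictly increasing on (b, ∞). -/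
/-!
For `x > b` the logarithmic potential may be differentiated under the integral sign, so
`g' x = ∫ ρ t / (t - x) dt + V' x / 2`. By partial fractions this Stieltjes transform reduces to
the integrals `∫_a^b √((t - a)(b - t)) / (t - c) dt = π ((a + b)/2 - c - √((a - c)(b - c)))`
for `c < a` (and their mirror images for `c > b`), which follow from an explicit arcsine
primitive. The first equilibrium equation cancels everything but the square-root terms, leaving
`g' x = ½ √((x - a)(x - b)) h x` with `h` the bracket in the density. The same equation gives
`h x = (α - 1 + γ x √(ab)) / (x √(ab) (1 + x))`; the second one, together with the strict AM-GM
inequality `√(ab) + 1 < √((a + 1)(b + 1))`, makes this numerator positive at `x = b`, hence for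
all `x > b`.
-/

open Real Set MeasureTheory intervalIntegral

theorem hasDerivAt_arcsin_div_sub {r k s : ℝ} (hk : k < -r) (hs : s ∈ Ioo (-r) r) :
    HasDerivAt (fun s => arcsin ((r ^ 2 - k * s) / (r * (s - k))))
      (√(k ^ 2 - r ^ 2) / ((s - k) * √(r ^ 2 - s ^ 2))) s := by
  obtain ⟨hrs, hsr⟩ := hs
  have hr : 0 < r := by linarith
  have hsk : 0 < s - k := by linarith
  have hkr : 0 < k ^ 2 - r ^ 2 := by nlinarith
  have hw : 0 < r ^ 2 - s ^ 2 := by nlinarith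
  have hden : r * (s - k) ≠ 0 := by positivity
  have hmob : HasDerivAt (fun s => (r ^ 2 - k * s) / (r * (s - k)))
      ((k ^ 2 - r ^ 2) / (r * (s - k) ^ 2)) s := by
    refine ((((hasDerivAt_id' s).const_mul k).const_sub (r ^ 2)).div
      (((hasDerivAt_id' s).sub_const k).const_mul r) hden).congr_deriv ?_
    field_simp
    ring
  have hone : 1 - ((r ^ 2 - k * s) / (r * (s - k))) ^ 2
      = (k ^ 2 - r ^ 2) * (r ^ 2 - s ^ 2) / (r * (s - k)) ^ 2 := by
    field_simp
    ring
  have hone_pos : 0 < 1 - ((r ^ 2 - k * s) / (r * (s - k))) ^ 2 := by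
    rw [hone]; positivity
  have hsqrt : √(1 - ((r ^ 2 - k * s) / (r * (s - k))) ^ 2)
      = √(k ^ 2 - r ^ 2) * √(r ^ 2 - s ^ 2) / (r * (s - k)) := by
    rw [hone, sqrt_div' _ (by positivity), sqrt_sq (by positivity), sqrt_mul hkr.le]
  refine ((hasDerivAt_arcsin (by nlinarith) (by nlinarith)).comp s hmob).congr_deriv ?_
  rw [hsqrt]
  have hq := sq_sqrt hkr.le
  have : 0 < √(k ^ 2 - r ^ 2) := sqrt_pos.mpr hkr
  have : 0 < √(r ^ 2 - s ^ 2) := sqrt_pos.mpr hw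
  field_simp
  rw [hq]

theorem integral_sqrt_sq_sub_sq_div_sub {r k : ℝ} (hr : 0 < r) (hk : k < -r) :
    ∫ s in -r..r, √(r ^ 2 - s ^ 2) / (s - k) = π * (-k - √(k ^ 2 - r ^ 2)) := by
  have hsk : ∀ s ∈ Icc (-r) r, 0 < s - k := fun s hs => by linarith [hs.1]
  let F : ℝ → ℝ := fun s => √(r ^ 2 - s ^ 2) - k * arcsin (s / r)
      - √(k ^ 2 - r ^ 2) * arcsin ((r ^ 2 - k * s) / (r * (s - k)))
  have hF : ∀ s ∈ Ioo (-r) r, HasDerivAt F (√(r ^ 2 - s ^ 2) / (s - k)) s := by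
    intro s hs
    have hw : 0 < r ^ 2 - s ^ 2 := by nlinarith [hs.1, hs.2]
    have := hsk s (Ioo_subset_Icc_self hs)
    have hsr : s / r ∈ Ioo (-1) 1 := by
      rw [mem_Ioo, lt_div_iff₀ hr, div_lt_one hr]; constructor <;> linarith [hs.1, hs.2]
    have hasin : HasDerivAt (fun s => arcsin (s / r)) (1 / √(r ^ 2 - s ^ 2)) s := by
      refine ((hasDerivAt_arcsin hsr.1.ne' hsr.2.ne).comp s
        ((hasDerivAt_id s).div_const r)).congr_deriv ?_
      rw [show 1 - (s / r) ^ 2 = (r ^ 2 - s ^ 2) / r ^ 2 by field_simp,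
        sqrt_div' _ (sq_nonneg r), sqrt_sq hr.le]
      field_simp
    refine ((((hasDerivAt_pow 2 s).const_sub (r ^ 2)).sqrt hw.ne').sub
      (hasin.const_mul k)).sub ((hasDerivAt_arcsin_div_sub hk hs).const_mul _) |>.congr_deriv ?_
    have : 0 < √(r ^ 2 - s ^ 2) := sqrt_pos.mpr hw
    field_simp
    rw [sq_sqrt hw.le, sq_sqrt (by nlinarith)]
    ring
  have hFcont : ContinuousOn F (Icc (-r) r) := by
    refine ContinuousOn.sub (by fun_prop) (ContinuousOn.mul continuousOn_const ?_)
    refine continuous_arcsin.comp_continuousOn (ContinuousOn.div (by fun_prop) (by fun_prop) ?_)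
    exact fun s hs => (mul_pos hr (hsk s hs)).ne'
  have hint : IntervalIntegrable (fun s => √(r ^ 2 - s ^ 2) / (s - k)) volume (-r) r := by
    refine ContinuousOn.intervalIntegrable (ContinuousOn.div (by fun_prop) (by fun_prop) ?_)
    rw [uIcc_of_le (by linarith)]
    exact fun s hs => (hsk s hs).ne'
  rw [integral_eq_sub_of_hasDerivAt_of_le (by linarith) hFcont hF hint]
  have hright : (r ^ 2 - k * r) / (r * (r - k)) = 1 := by
    rw [div_eq_one_iff_eq (by nlinarith)]; ring
  have hleft : (r ^ 2 - k * -r) / (r * (-r - k)) = -1 := by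
    rw [div_eq_iff (by nlinarith)]; ring
  simp only [F, neg_div, div_self hr.ne', hright, hleft, neg_sq, sub_self, sqrt_zero,
    arcsin_one, arcsin_neg_one]
  ring

theorem integral_sqrt_mul_div_sub_of_lt {a b c : ℝ} (hca : c < a) (hab : a < b) :
    ∫ t in a..b, √((t - a) * (b - t)) / (t - c)
      = π * ((a + b) / 2 - c - √((a - c) * (b - c))) := by
  have hshift := integral_comp_add_right (a := -((b - a) / 2)) (b := (b - a) / 2)
    (fun t => √((t - a) * (b - t)) / (t - c)) ((a + b) / 2)
  rw [show -((b - a) / 2) + (a + b) / 2 = a by ring,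
    show (b - a) / 2 + (a + b) / 2 = b by ring] at hshift
  rw [← hshift]
  convert integral_sqrt_sq_sub_sq_div_sub (r := (b - a) / 2) (k := c - (a + b) / 2)
    (by linarith) (by linarith) using 1
  · refine integral_congr fun s _ => ?_
    ring_nf
  · ring_nf

theorem integral_sqrt_mul_div_sub_of_gt {a b x : ℝ} (hab : a < b) (hbx : b < x) :
    ∫ t in a..b, √((t - a) * (b - t)) / (x - t)
      = π * (x - (a + b) / 2 - √((x - a) * (x - b))) := by
  have hreflect := integral_comp_sub_left (a := a) (b := b)
    (fun t => √((t - a) * (b - t)) / (t - (a + b - x))) (a + b)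
  rw [show a + b - b = a by ring, show a + b - a = b by ring] at hreflect
  convert hreflect.trans (integral_sqrt_mul_div_sub_of_lt (c := a + b - x) (by linarith) hab)
    using 1
  · refine integral_congr fun t _ => ?_
    ring_nf
  · ring_nf

theorem intervalIntegrable_sqrt_mul_div {a b : ℝ} {f : ℝ → ℝ} (hf : ContinuousOn f (uIcc a b))
    (hf0 : ∀ t ∈ uIcc a b, f t ≠ 0) :
    IntervalIntegrable (fun t => √((t - a) * (b - t)) / f t) volume a b :=
  (ContinuousOn.div (by fun_prop) hf hf0).intervalIntegrable

theorem integral_sqrt_mul_div_sub_mul_sub {a b c x : ℝ} (hca : c < a) (hab : a < b)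
    (hbx : b < x) :
    ∫ t in a..b, √((t - a) * (b - t)) / ((t - c) * (t - x))
      = -π * (x - c - √((a - c) * (b - c)) - √((x - a) * (x - b))) / (x - c) := by
  have hmem : ∀ t ∈ uIcc a b, c < t ∧ t < x := fun t ht => by
    rw [uIcc_of_le hab.le] at ht; exact ⟨by linarith [ht.1], by linarith [ht.2]⟩
  have hpartial : ∀ t ∈ uIcc a b, √((t - a) * (b - t)) / ((t - c) * (t - x))
      = -(x - c)⁻¹ * (√((t - a) * (b - t)) / (t - c) + √((t - a) * (b - t)) / (x - t)) := by
    intro t ht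
    have := hmem t ht
    have : t - c ≠ 0 := by linarith
    have : t - x ≠ 0 := by linarith
    have : x - t ≠ 0 := by linarith
    have : x - c ≠ 0 := by linarith
    field_simp
    ring
  rw [integral_congr hpartial, intervalIntegral.integral_const_mul,
    integral_add
      (intervalIntegrable_sqrt_mul_div (by fun_prop) fun t ht => by linarith [hmem t ht])
      (intervalIntegrable_sqrt_mul_div (by fun_prop) fun t ht => by linarith [hmem t ht]),
    integral_sqrt_mul_div_sub_of_lt hca hab, integral_sqrt_mul_div_sub_of_gt hab hbx]
  ring

noncomputable def equilibriumDensity (α β a b t : ℝ) : ℝ :=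
  1 / (2 * π) * √((t - a) * (b - t)) *
    ((α - 1) / (t * √(a * b)) - β / ((1 + t) * √((a + 1) * (b + 1))))

theorem intervalIntegrable_equilibriumDensity {α β a b : ℝ} (ha : 0 < a) (hab : a ≤ b) :
    IntervalIntegrable (equilibriumDensity α β a b) volume a b := by
  have hpos : ∀ t ∈ uIcc a b, 0 < t := fun t ht => by
    rw [uIcc_of_le hab] at ht; exact ha.trans_le ht.1
  unfold equilibriumDensity
  simp only [div_mul_eq_div_div_swap]
  exact ContinuousOn.intervalIntegrable (ContinuousOn.mul (by fun_prop)
    (ContinuousOn.sub (ContinuousOn.div (by fun_prop) (by fun_prop) fun t ht => (hpos t ht).ne')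
      (ContinuousOn.div (by fun_prop) (by fun_prop) fun t ht => by linarith [hpos t ht])))

theorem integral_equilibriumDensity_div_sub {α β a b x : ℝ} (ha : 0 < a) (hab : a < b)
    (hbx : b < x) :
    ∫ t in a..b, equilibriumDensity α β a b t / (t - x)
      = -((α - 1) / √(a * b) * (x - √(a * b) - √((x - a) * (x - b))) / x
          - β / √((a + 1) * (b + 1)) * (x + 1 - √((a + 1) * (b + 1)) - √((x - a) * (x - b)))
            / (x + 1)) / 2 := by
  set p := √(a * b)
  set q := √((a + 1) * (b + 1))
  have hpartial : ∀ t ∈ uIcc a b, equilibriumDensity α β a b t / (t - x)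
      = (α - 1) / (2 * π * p) * (√((t - a) * (b - t)) / ((t - 0) * (t - x)))
        - β / (2 * π * q) * (√((t - a) * (b - t)) / ((t - -1) * (t - x))) := by
    intro t ht
    rw [equilibriumDensity, sub_zero, sub_neg_eq_add, add_comm t 1]
    simp only [div_eq_mul_inv, mul_inv]
    ring
  have hint : ∀ c < a, IntervalIntegrable
      (fun t => √((t - a) * (b - t)) / ((t - c) * (t - x))) volume a b := fun c hc =>
    intervalIntegrable_sqrt_mul_div (by fun_prop) fun t ht => by
      rw [uIcc_of_le hab.le] at ht
      exact mul_ne_zero (by linarith [ht.1]) (by linarith [ht.2])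
  rw [integral_congr hpartial, integral_sub ((hint 0 ha).const_mul _)
      ((hint (-1) (by linarith)).const_mul _), intervalIntegral.integral_const_mul,
    intervalIntegral.integral_const_mul, integral_sqrt_mul_div_sub_mul_sub ha hab hbx,
    integral_sqrt_mul_div_sub_mul_sub (by linarith) hab hbx]
  have : x ≠ 0 := by linarith
  have : x + 1 ≠ 0 := by linarith
  simp only [sub_zero, sub_neg_eq_add]
  field_simp
  ring

theorem hasDerivAt_integral_log_inv_abs_sub_mul {ρ : ℝ → ℝ} {a b x : ℝ} (hab : a ≤ b)
    (hρ : IntervalIntegrable ρ volume a b) (hbx : b < x) :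
    HasDerivAt (fun y => ∫ t in a..b, log |y - t|⁻¹ * ρ t) (∫ t in a..b, ρ t / (t - x)) x := by
  have hlog : ∀ y t : ℝ, log |y - t|⁻¹ = -log (y - t) := fun y t => by rw [log_inv, log_abs]
  simp_rw [hlog]
  obtain ⟨ε, hε, hεx⟩ : ∃ ε, 0 < ε ∧ b + ε < x := ⟨(x - b) / 2, by linarith, by linarith⟩
  have hgap : ∀ t ∈ uIoc a b, ∀ y ∈ Ioi (b + ε), ε < y - t := fun t ht y hy => by
    rw [uIoc_of_le hab] at ht; linarith [ht.2, mem_Ioi.mp hy]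
  have hρ_meas : AEStronglyMeasurable ρ (volume.restrict (uIoc a b)) :=
    hρ.def'.aestronglyMeasurable
  have hlog_cont : ContinuousOn (fun t => -log (x - t)) (uIcc a b) := by
    refine (ContinuousOn.log (by fun_prop) fun t ht => ?_).neg
    rw [uIcc_of_le hab] at ht
    linarith [ht.2]
  refine (intervalIntegral.hasDerivAt_integral_of_dominated_loc_of_deriv_le
    (F' := fun y t => ρ t / (t - y)) (bound := fun t => ε⁻¹ * ‖ρ t‖) (Ioi_mem_nhds hεx)
    (.of_forall fun y =>
      (by fun_prop : Measurable fun t => -log (y - t)).aestronglyMeasurable.mul hρ_meas)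
    (hρ.continuousOn_mul hlog_cont)
    (hρ_meas.mul (by fun_prop : Measurable fun t => (t - x)⁻¹).aestronglyMeasurable)
    (.of_forall fun t ht y hy => ?_) (hρ.norm.const_mul _)
    (.of_forall fun t ht y hy => ?_)).2
  · have hyt := hgap t ht y hy
    rw [norm_div, Real.norm_eq_abs (t - y), abs_sub_comm, abs_of_pos (hε.trans hyt),
      div_eq_inv_mul]
    gcongr
  · have hyt := hgap t ht y hy
    refine ((((hasDerivAt_id' y).sub_const t).log (by linarith)).neg.mul_const _).congr_deriv ?_
    rw [← neg_sub y t]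
    field_simp

theorem equilibrium_numerator_pos {α β γ a b : ℝ} (ha : 0 < a) (hab : a < b) (hγ : 0 < γ)
    (h1 : γ + β / √((a + 1) * (b + 1)) - (α - 1) / √(a * b) = 0)
    (h2 : γ * (a + b) / 2 - α + 1 + β - β / √((a + 1) * (b + 1)) = 2) :
    0 < α - 1 + b * √(a * b) * γ := by
  set s := √(a * b)
  set u := √((a + 1) * (b + 1))
  have hs : 0 < s := sqrt_pos.mpr (by nlinarith)
  have hu : 0 < u := sqrt_pos.mpr (by nlinarith)
  have hs2 : s ^ 2 = a * b := sq_sqrt (by nlinarith)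
  have hu2 : u ^ 2 = (a + 1) * (b + 1) := sq_sqrt (by nlinarith)
  have hamgm : 2 * s < a + b := by nlinarith [mul_pos (sub_pos.mpr hab) (sub_pos.mpr hab)]
  have hsu : 0 < u - s - 1 := by nlinarith
  have hub : 0 < 2 * b - u - s + 1 := by nlinarith
  have hβ : β = ((α - 1) / s - γ) * u := by field_simp at h1 ⊢; linarith
  -- the second equilibrium equation, with `β` eliminated by the first
  have hα : (α - 1) * (u - s - 1) = 2 * s - γ * s * ((a + b) / 2 - u + 1) := by
    rw [hβ] at h2; field_simp at h2; linarith
  have hfactor : (α - 1 + b * s * γ) * (u - s - 1)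
      = 2 * s + γ * s * (u - s - 1) * (2 * b - u - s + 1) / 2 := by
    linear_combination hα + (γ * s / 2) * hu2 - (γ * s / 2) * hs2
  have : 0 < (α - 1 + b * s * γ) * (u - s - 1) := by rw [hfactor]; positivity
  exact pos_of_mul_pos_left this hsu.le

theorem equilibrium_factor_pos {α β γ a b x : ℝ} (ha : 0 < a) (hab : a < b) (hγ : 0 < γ)
    (h1 : γ + β / √((a + 1) * (b + 1)) - (α - 1) / √(a * b) = 0)
    (h2 : γ * (a + b) / 2 - α + 1 + β - β / √((a + 1) * (b + 1)) = 2) (hbx : b ≤ x) :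
    0 < (α - 1) / (x * √(a * b)) - β / ((1 + x) * √((a + 1) * (b + 1))) := by
  have hx : 0 < x := by linarith
  have hs : 0 < √(a * b) := sqrt_pos.mpr (by nlinarith)
  have hu : 0 < √((a + 1) * (b + 1)) := sqrt_pos.mpr (by nlinarith)
  have hβ : β = ((α - 1) / √(a * b) - γ) * √((a + 1) * (b + 1)) := by
    field_simp at h1 ⊢; linarith
  have hnum : 0 < α - 1 + x * √(a * b) * γ := by
    nlinarith [equilibrium_numerator_pos ha hab hγ h1 h2,
      mul_nonneg (mul_nonneg hs.le hγ.le) (sub_nonneg.mpr hbx)]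
  have hfactor : (α - 1) / (x * √(a * b)) - β / ((1 + x) * √((a + 1) * (b + 1)))
      = (α - 1 + x * √(a * b) * γ) / (x * √(a * b) * (1 + x)) := by
    rw [hβ]; field_simp; ring
  rw [hfactor]
  positivity

theorem hasDerivAt_external_field {α β γ x : ℝ} (hx : 0 < x) :
    HasDerivAt (fun y => γ * y + β * log (1 + y) - (α - 1) * log y)
      (γ + β / (1 + x) - (α - 1) / x) x :=
  ((((hasDerivAt_id' x).const_mul γ).add
    ((((hasDerivAt_id' x).const_add 1).log (by linarith)).const_mul β)).sub
    ((hasDerivAt_log hx.ne').const_mul _)).congr_deriv (by field_simp)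

theorem stmt_17 (α β γ a b : ℝ) (ha : 0 < a) (hab : a < b) (hγ : 0 < γ)
    (h1 : γ + β / Real.sqrt ((a + 1) * (b + 1)) - (α - 1) / Real.sqrt (a * b) = 0)
    (h2 : γ * (a + b) / 2 - α + 1 + β - β / Real.sqrt ((a + 1) * (b + 1)) = 2)
    (V : ℝ → ℝ) (hV : ∀ x, V x = γ * x + β * Real.log (1 + x) - (α - 1) * Real.log x)
    (ρ : ℝ → ℝ)
    (hρ : ∀ x, ρ x = (1 / (2 * Real.pi)) * Real.sqrt ((x - a) * (b - x)) *
      ((α - 1) / (x * Real.sqrt (a * b)) - β / ((1 + x) * Real.sqrt ((a + 1) * (b + 1)))))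
    (g : ℝ → ℝ)
    (hg : ∀ x, g x = (∫ t in a..b, Real.log (|x - t|⁻¹) * ρ t) + V x / 2 +
      (1 / 2) * ∫ t in a..b, V t * ρ t) :
    (∀ x, b < x →
      HasDerivAt g ((1 / 2) * Real.sqrt ((x - a) * (x - b)) *
        ((α - 1) / (x * Real.sqrt (a * b)) -
          β / ((1 + x) * Real.sqrt ((a + 1) * (b + 1))))) x ∧
      0 < (1 / 2) * Real.sqrt ((x - a) * (x - b)) *
        ((α - 1) / (x * Real.sqrt (a * b)) -
          β / ((1 + x) * Real.sqrt ((a + 1) * (b + 1))))) ∧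
    StrictMonoOn g (Set.Ioi b) := by
  have hρ_eq : ρ = equilibriumDensity α β a b := funext hρ
  have hderiv : ∀ x, b < x → HasDerivAt g ((1 / 2) * √((x - a) * (x - b)) *
      ((α - 1) / (x * √(a * b)) - β / ((1 + x) * √((a + 1) * (b + 1))))) x := by
    intro x hbx
    have hV' : HasDerivAt V (γ + β / (1 + x) - (α - 1) / x) x :=
      funext hV ▸ hasDerivAt_external_field (by linarith)
    have hU := hasDerivAt_integral_log_inv_abs_sub_mul hab.le
      (hρ_eq ▸ intervalIntegrable_equilibriumDensity ha hab.le) hbx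
    rw [funext hg]
    refine ((hU.add (hV'.div_const 2)).add_const _).congr_deriv ?_
    have hx : 0 < x := by linarith
    have hs : 0 < √(a * b) := sqrt_pos.mpr (by nlinarith)
    have hu : 0 < √((a + 1) * (b + 1)) := sqrt_pos.mpr (by nlinarith)
    rw [hρ_eq, integral_equilibriumDensity_div_sub ha hab hbx,
      show γ = (α - 1) / √(a * b) - β / √((a + 1) * (b + 1)) by linarith]
    field_simp
    ring
  have hpos : ∀ x, b < x → 0 < (1 / 2) * √((x - a) * (x - b)) *
      ((α - 1) / (x * √(a * b)) - β / ((1 + x) * √((a + 1) * (b + 1)))) := fun x hbx =>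
    mul_pos (mul_pos one_half_pos (sqrt_pos.mpr (by nlinarith)))
      (equilibrium_factor_pos ha hab hγ h1 h2 hbx.le)
  refine ⟨fun x hbx => ⟨hderiv x hbx, hpos x hbx⟩, strictMonoOn_of_deriv_pos (convex_Ioi b)
    (fun x hx => (hderiv x hx).continuousAt.continuousWithinAt) fun x hx => ?_⟩
  rw [interior_Ioi] at hx
  exact (hderiv x hx).deriv ▸ hpos x hx
end
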